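/- For any knot K in S^3, theta(K) + theta(-K) <= u(K), where u(K) is the unknotting number of K. -/

import Mathlib

/-- An abstract model of the setting of Baraglia–Hekmati: the collection of
(isotopy classes of) knots in `S³` together with the invariants entering the
definition of the concordance invariant `θ`.  Here `delta K j` models the
equivariant d-invariants `δ_j(K) = 2 d_{ℤ/2,Q^j}(Σ₂(K), s₀)` of the double
cover `Σ₂(K)` of `S³` branched over `K`, equipped with its distinguished
spin^c structure `s₀` and covering involution. -/
structure KnotTheory where
  /-- knots in `S³` -/
  Knot : Type
  /-- the mirror image with reversed orientation, `-K` -/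
  mirror : Knot → Knot
  /-- the knot signature `σ(K)` -/
  sigma : Knot → ℤ
  /-- the smooth slice genus `g₄(K)` -/
  g4 : Knot → ℕ
  /-- the equivariant d-invariants `δ_j(K) = 2 d_{ℤ/2,Q^j}(Σ₂(K), s₀)` -/
  delta : Knot → ℕ → ℤ
  sigma_mirror : ∀ K, sigma (mirror K) = - sigma K
  g4_mirror : ∀ K, g4 (mirror K) = g4 K

namespace KnotTheory

variable (T : KnotTheory)

/-- `ξ_j(K) = δ_j(K)/4 + σ(K)/8`. -/
noncomputable def xi (K : T.Knot) (j : ℕ) : ℚ :=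
  (T.delta K j : ℚ) / 4 + (T.sigma K : ℚ) / 8

/-- `j(K)`: the least `j` with `ξ_j(K) = 0`. -/
noncomputable def jmin (K : T.Knot) : ℕ := sInf {j : ℕ | T.xi K j = 0}

/-- `θ(K) = max {0, j(-K) - σ(K)/2}`. -/
noncomputable def theta (K : T.Knot) : ℚ :=
  max 0 ((T.jmin (T.mirror K) : ℚ) - (T.sigma K : ℚ) / 2)

/-- The properties of `ξ` established by Baraglia–Hekmati: it is a
non-increasing sequence of non-negative integers, vanishing for
`j ≥ g₄(K) - σ(K)/2`. -/
def XiProperties : Prop :=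
  (∀ K j, 0 ≤ T.xi K j) ∧
  (∀ K j, T.xi K (j + 1) ≤ T.xi K j) ∧
  (∀ K j, ∃ n : ℤ, T.xi K j = (n : ℚ)) ∧
  (∀ (K : T.Knot) (j : ℕ), (T.g4 K : ℚ) - (T.sigma K : ℚ) / 2 ≤ (j : ℚ) → T.xi K j = 0)

end KnotTheory

/-! A crossing change `K₊ → K₋` mirrors to the crossing change `-K₋ → -K₊`, so `θ(K)` drops by at
most one while `θ(-K)` rises by at most one: `θ(K) + θ(-K)` is `1`-Lipschitz along crossing changes.
It vanishes on the unknot, so along an unknotting sequence of length `u(K)` it stays below `u(K)`. -/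

theorem le_add_nsmul_of_forall_lt_succ_le {R : Type*} [AddCommGroup R] [PartialOrder R]
    [IsOrderedAddMonoid R] {g : ℕ → R} {c : R} {n : ℕ} (h : ∀ i < n, g (i + 1) ≤ g i + c) :
    g n ≤ g 0 + n • c := by
  induction n with
  | zero => simp
  | succ n ih =>
    calc g (n + 1) ≤ g n + c := h n n.lt_succ_self
      _ ≤ g 0 + n • c + c := by gcongr; exact ih fun i hi => h i (hi.trans n.lt_succ_self)
      _ = g 0 + (n + 1) • c := by rw [succ_nsmul, add_assoc]

namespace KnotTheory

variable (T : KnotTheory)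

theorem theta_add_theta_mirror_le_of_crossingChange {CrossingChange : T.Knot → T.Knot → Prop}
    (crossingChange_mirror : ∀ Kp Km, CrossingChange Kp Km →
      CrossingChange (T.mirror Km) (T.mirror Kp))
    (theta_crossingChange : ∀ Kp Km, CrossingChange Kp Km →
      0 ≤ T.theta Kp - T.theta Km ∧ T.theta Kp - T.theta Km ≤ 1)
    {K K' : T.Knot} (h : CrossingChange K K' ∨ CrossingChange K' K) :
    T.theta K' + T.theta (T.mirror K') ≤ T.theta K + T.theta (T.mirror K) + 1 := by
  rcases h with h | h <;>
  · have := theta_crossingChange _ _ h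
    have := theta_crossingChange _ _ (crossingChange_mirror _ _ h)
    linarith

end KnotTheory

/-- `CrossingChange K₊ K₋` models "`K₋` is obtained from `K₊` by changing a positive crossing into a
negative crossing". -/
theorem theta_le_unknotting_number_general (T : KnotTheory)
    (CrossingChange : T.Knot → T.Knot → Prop)
    (crossingChange_mirror : ∀ Kp Km, CrossingChange Kp Km →
      CrossingChange (T.mirror Km) (T.mirror Kp))
    (unknot : T.Knot)
    (mirror_unknot : T.mirror unknot = unknot)
    (theta_unknot : T.theta unknot = 0)
    (theta_crossingChange : ∀ Kp Km, CrossingChange Kp Km →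
      0 ≤ T.theta Kp - T.theta Km ∧ T.theta Kp - T.theta Km ≤ 1)
    (u : T.Knot → ℕ)
    (hu : ∀ K : T.Knot, IsLeast {n : ℕ | ∃ f : ℕ → T.Knot, f 0 = unknot ∧ f n = K ∧
      ∀ i < n, CrossingChange (f i) (f (i + 1)) ∨ CrossingChange (f (i + 1)) (f i)} (u K))
    (K : T.Knot) :
    T.theta K + T.theta (T.mirror K) ≤ (u K : ℚ) := by
  obtain ⟨⟨f, hf0, hfn, hstep⟩, -⟩ := hu K
  have hchain := le_add_nsmul_of_forall_lt_succ_le (c := (1 : ℚ))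
    (g := fun i => T.theta (f i) + T.theta (T.mirror (f i))) fun i hi =>
      T.theta_add_theta_mirror_le_of_crossingChange crossingChange_mirror theta_crossingChange
        (hstep i hi)
  simpa [hf0, hfn, mirror_unknot, theta_unknot] using hchain

/-- For any knot `K`, `θ(K) + θ(-K) ≤ u(K)`, where `u(K)`
is the unknotting number of `K`.  Here `CrossingChange K₊ K₋` models the
relation "`K₋` is obtained from `K₊` by changing a positive crossing into a
negative crossing" (reversed by taking mirrors), and the unknotting number
`u K` is the least `n` such that `K` can be reached from the unknot by a
sequence of `n` crossing changes.  The hypotheses record the context facts: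
`θ` vanishes on the unknot, and a single crossing change satisfies
`0 ≤ θ(K₊) - θ(K₋) ≤ 1`. -/
theorem theta_le_unknotting_number (T : KnotTheory) (hXi : T.XiProperties)
    (CrossingChange : T.Knot → T.Knot → Prop)
    (crossingChange_mirror : ∀ Kp Km, CrossingChange Kp Km →
      CrossingChange (T.mirror Km) (T.mirror Kp))
    (unknot : T.Knot)
    (mirror_unknot : T.mirror unknot = unknot)
    (theta_unknot : T.theta unknot = 0)
    (theta_crossingChange : ∀ Kp Km, CrossingChange Kp Km →
      0 ≤ T.theta Kp - T.theta Km ∧ T.theta Kp - T.theta Km ≤ 1)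
    (u : T.Knot → ℕ)
    (hu : ∀ K : T.Knot, IsLeast {n : ℕ | ∃ f : ℕ → T.Knot, f 0 = unknot ∧ f n = K ∧
      ∀ i < n, CrossingChange (f i) (f (i + 1)) ∨ CrossingChange (f (i + 1)) (f i)} (u K))
    (K : T.Knot) :
    T.theta K + T.theta (T.mirror K) ≤ (u K : ℚ) :=
  theta_le_unknotting_number_general T CrossingChange crossingChange_mirror unknot mirror_unknot
    theta_unknot theta_crossingChange u hu K
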